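/- If a graph G has no perfect matching, then w_def(G) ≥ 2δ(G) − def(G). -/

import Mathlib

open scoped Classical

/-- A proper edge-coloring: distinct edges sharing a vertex receive distinct colors. -/
def IsProperEdgeColoring {V : Type*} (G : SimpleGraph V) (c : Sym2 V → ℕ) : Prop :=
  ∀ e ∈ G.edgeSet, ∀ e' ∈ G.edgeSet, e ≠ e' → (∃ v, v ∈ e ∧ v ∈ e') → c e ≠ c e'

/-- A proper `t`-edge-coloring: proper, colors lie in `{1,…,t}`, and all colors are used. -/
def IsProperTEdgeColoring {V : Type*} (G : SimpleGraph V) (t : ℕ) (c : Sym2 V → ℕ) : Prop :=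
  IsProperEdgeColoring G c ∧ (∀ e ∈ G.edgeSet, c e ∈ Finset.Icc 1 t) ∧
    ∀ k ∈ Finset.Icc 1 t, ∃ e ∈ G.edgeSet, c e = k

/-- The vSpectrum of a vertex: the set of colors appearing on edges incident to `v`. -/
noncomputable def vSpectrum {V : Type*} [Fintype V] (G : SimpleGraph V) (c : Sym2 V → ℕ)
    (v : V) : Finset ℕ :=
  (Finset.univ.filter (fun u => G.Adj v u)).image (fun u => c s(v, u))

/-- The deficiency of a finite set of naturals: `max S − min S − |S| + 1`. -/
def setDef (S : Finset ℕ) : ℕ := (S.max.getD 0 - S.min.getD 0) - (S.card - 1)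

/-- The deficiency of a proper edge-coloring: the sum of vertex deficiencies. -/
noncomputable def colDef {V : Type*} [Fintype V] (G : SimpleGraph V) (c : Sym2 V → ℕ) : ℕ :=
  ∑ v, setDef (vSpectrum G c v)

/-- The deficiency of a graph: the minimum deficiency over all proper edge-colorings. -/
noncomputable def graphDef {V : Type*} [Fintype V] (G : SimpleGraph V) : ℕ :=
  sInf {d | ∃ c, IsProperEdgeColoring G c ∧ colDef G c = d}

/-- `w_def G`: the least `t` such that some proper `t`-edge-coloring attains `def(G)`. -/
noncomputable def wdef {V : Type*} [Fintype V] (G : SimpleGraph V) : ℕ :=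
  sInf {t | ∃ c, IsProperTEdgeColoring G t c ∧ colDef G c = graphDef G}

/-- `W_def G`: the greatest `t` such that some proper `t`-edge-coloring attains `def(G)`. -/
noncomputable def Wdef {V : Type*} [Fintype V] (G : SimpleGraph V) : ℕ :=
  sSup {t | ∃ c, IsProperTEdgeColoring G t c ∧ colDef G c = graphDef G}

/-- A graph is interval colorable if some proper edge-coloring has deficiency `0`. -/
def IntervalColorable {V : Type*} [Fintype V] (G : SimpleGraph V) : Prop :=
  ∃ c, IsProperEdgeColoring G c ∧ colDef G c = 0

/-- `w G`: the least `t` such that `G` has an interval `t`-coloring. -/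
noncomputable def wint {V : Type*} [Fintype V] (G : SimpleGraph V) : ℕ :=
  sInf {t | ∃ c, IsProperTEdgeColoring G t c ∧ colDef G c = 0}

/-- `W G`: the greatest `t` such that `G` has an interval `t`-coloring. -/
noncomputable def Wint {V : Type*} [Fintype V] (G : SimpleGraph V) : ℕ :=
  sSup {t | ∃ c, IsProperTEdgeColoring G t c ∧ colDef G c = 0}

/-!
Fix a colouring attaining `def(G)` with `t = w_def(G)` colours; such colourings exist because
renumbering the colours of any optimal colouring by their rank among the used colours is monotone
and 1-Lipschitz, so it keeps the colouring proper without raising any vertex deficiency. Every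
spectrum lies in `[1, t]` and has at least `δ` colours, so its hull `[min, max]` contains the
window `[t + 1 - δ, δ]` of `2δ - t` colours. If no colour occurs at every vertex (a colour that
does spans a perfect matching), each colour of the window is a gap at some vertex, whence
`2δ - t ≤ def(G)`.
-/

open Finset

namespace Finset

lemma subset_Icc_min'_max' {S : Finset ℕ} (hS : S.Nonempty) : S ⊆ Icc (S.min' hS) (S.max' hS) :=
  fun _ hk => mem_Icc.mpr ⟨min'_le _ _ hk, le_max' _ _ hk⟩

lemma card_le_max'_sub_min'_add_one {S : Finset ℕ} (hS : S.Nonempty) :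
    #S ≤ S.max' hS + 1 - S.min' hS := by
  simpa using card_le_card (subset_Icc_min'_max' hS)

end Finset

lemma setDef_eq_of_nonempty {S : Finset ℕ} (hS : S.Nonempty) :
    setDef S = (S.max' hS - S.min' hS) - (#S - 1) := by
  rw [setDef, ← coe_max' hS, ← coe_min' hS]
  rfl

lemma setDef_eq_card_sdiff {S : Finset ℕ} (hS : S.Nonempty) :
    setDef S = #(Icc (S.min' hS) (S.max' hS) \ S) := by
  rw [card_sdiff_of_subset (subset_Icc_min'_max' hS), Nat.card_Icc, setDef_eq_of_nonempty hS]
  have := card_le_max'_sub_min'_add_one hS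
  have := hS.card_pos
  omega

lemma setDef_image_le {S : Finset ℕ} {f : ℕ → ℕ} (hf : Monotone f) (hinj : Set.InjOn f S)
    (hlip : ∀ a b, f b - f a ≤ b - a) : setDef (S.image f) ≤ setDef S := by
  rcases S.eq_empty_or_nonempty with rfl | hS
  · simp
  rw [setDef_eq_of_nonempty (hS.image f), setDef_eq_of_nonempty hS, card_image_of_injOn hinj,
    max'_image hf, min'_image hf]
  have := hlip (S.min' hS) (S.max' hS)
  omega

lemma two_mul_le_add_sum_setDef {ι : Type*} [Fintype ι] {S : ι → Finset ℕ} {t δ : ℕ}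
    (hS : ∀ i, S i ⊆ Icc 1 t) (hcard : ∀ i, δ ≤ #(S i)) (hgap : ∀ k, ∃ i, k ∉ S i) :
    2 * δ ≤ t + ∑ i, setDef (S i) := by
  rcases Nat.eq_zero_or_pos δ with rfl | hδ
  · omega
  have hne : ∀ i, (S i).Nonempty := fun i => card_pos.mp (hδ.trans_le (hcard i))
  have hwindow : Icc (t + 1 - δ) δ ⊆
      univ.biUnion fun i => Icc ((S i).min' (hne i)) ((S i).max' (hne i)) \ S i := by
    intro k hk
    obtain ⟨i, hki⟩ := hgap k
    have hmin := hS i ((S i).min'_mem (hne i))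
    have hmax := hS i ((S i).max'_mem (hne i))
    have := (hcard i).trans (card_le_max'_sub_min'_add_one (hne i))
    simp only [mem_Icc] at hk hmin hmax
    simp only [mem_biUnion, mem_univ, mem_sdiff, mem_Icc, true_and]
    exact ⟨i, ⟨by omega, by omega⟩, hki⟩
  have hδt : δ ≤ t := by
    obtain ⟨i, -⟩ := hgap 0
    simpa using (hcard i).trans (card_le_card (hS i))
  calc 2 * δ ≤ t + #(Icc (t + 1 - δ) δ) := by rw [Nat.card_Icc]; omega
    _ ≤ t + ∑ i, setDef (S i) := by
      gcongr
      refine (card_le_card hwindow).trans (card_biUnion_le.trans_eq ?_)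
      exact sum_congr rfl fun i _ => (setDef_eq_card_sdiff (hne i)).symm

def rankIn (U : Finset ℕ) (k : ℕ) : ℕ := #{u ∈ U | u ≤ k}

lemma rankIn_mono (U : Finset ℕ) : Monotone (rankIn U) :=
  fun _ _ hab => card_le_card (monotone_filter_right U fun _ _ hx => hx.trans hab)

lemma rankIn_strictMonoOn (U : Finset ℕ) : StrictMonoOn (rankIn U) U := by
  intro a _ b hb hab
  refine card_lt_card ⟨monotone_filter_right U fun _ _ hx => hx.trans hab.le, fun hsub => ?_⟩
  have := (mem_filter.mp (hsub (mem_filter.mpr ⟨hb, le_rfl⟩))).2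
  omega

lemma rankIn_sub_rankIn_le (U : Finset ℕ) (a b : ℕ) : rankIn U b - rankIn U a ≤ b - a := by
  have hsub : {u ∈ U | u ≤ b} ⊆ {u ∈ U | u ≤ a} ∪ Ioc a b := by
    intro x hx
    simp only [mem_filter, mem_union, mem_Ioc] at hx ⊢
    rcases le_or_gt x a with h | h
    · exact .inl ⟨hx.1, h⟩
    · exact .inr ⟨h, hx.2⟩
  have := (card_le_card hsub).trans (card_union_le _ _)
  rw [Nat.card_Ioc] at this
  unfold rankIn
  omega

lemma image_rankIn (U : Finset ℕ) : U.image (rankIn U) = Icc 1 #U := by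
  refine eq_of_subset_of_card_le (fun k hk => ?_) ?_
  · obtain ⟨a, ha, rfl⟩ := mem_image.mp hk
    exact mem_Icc.mpr
      ⟨card_pos.mpr ⟨a, mem_filter.mpr ⟨ha, le_rfl⟩⟩, card_le_card (filter_subset _ _)⟩
  · rw [Nat.card_Icc, card_image_of_injOn (rankIn_strictMonoOn U).injOn]
    omega

section EdgeColoring

variable {V : Type*} {G : SimpleGraph V} {c : Sym2 V → ℕ}

lemma isProperEdgeColoring_of_injective (hc : Function.Injective c) : IsProperEdgeColoring G c :=
  fun _ _ _ _ hne _ h => hne (hc h)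

lemma IsProperEdgeColoring.comp (hc : IsProperEdgeColoring G c) {f : ℕ → ℕ}
    (hf : Set.InjOn f (c '' G.edgeSet)) : IsProperEdgeColoring G (f ∘ c) :=
  fun e he e' he' hne hv h => hc e he e' he' hne hv (hf ⟨e, he, rfl⟩ ⟨e', he', rfl⟩ h)

lemma IsProperEdgeColoring.eq_of_adj_of_eq (hc : IsProperEdgeColoring G c) {v u w : V}
    (hu : G.Adj v u) (hw : G.Adj v w) (h : c s(v, u) = c s(v, w)) : u = w := by
  by_contra hne
  exact hc _ hu _ hw (fun he => hne (Sym2.congr_right.mp he))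
    ⟨v, Sym2.mem_mk_left _ _, Sym2.mem_mk_left _ _⟩ h

lemma IsProperEdgeColoring.exists_isPerfectMatching (hc : IsProperEdgeColoring G c) {k : ℕ}
    (hk : ∀ v, ∃ u, G.Adj v u ∧ c s(v, u) = k) : ∃ M : G.Subgraph, M.IsPerfectMatching := by
  let H : SimpleGraph V :=
    { Adj := fun a b => G.Adj a b ∧ c s(a, b) = k
      symm := ⟨fun a b h => ⟨h.1.symm, Sym2.eq_swap ▸ h.2⟩⟩
      loopless := ⟨fun a h => h.1.ne rfl⟩ }
  refine ⟨SimpleGraph.toSubgraph H fun _ _ h => h.1,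
    SimpleGraph.Subgraph.isPerfectMatching_iff.mpr fun v => ?_⟩
  obtain ⟨u, hu, hcu⟩ := hk v
  exact ⟨u, ⟨hu, hcu⟩, fun w hw => hc.eq_of_adj_of_eq hw.1 hu (hw.2.trans hcu.symm)⟩

variable [Fintype V]

lemma mem_vSpectrum {v : V} {k : ℕ} :
    k ∈ vSpectrum G c v ↔ ∃ u, G.Adj v u ∧ c s(v, u) = k := by
  simp [vSpectrum]

lemma IsProperEdgeColoring.card_vSpectrum (hc : IsProperEdgeColoring G c) (v : V) :
    #(vSpectrum G c v) = G.degree v := by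
  rw [vSpectrum, card_image_of_injOn, ← G.card_neighborFinset_eq_degree,
    G.neighborFinset_eq_filter]
  intro u hu w hw h
  exact hc.eq_of_adj_of_eq (by simpa using hu) (by simpa using hw) h

lemma IsProperTEdgeColoring.vSpectrum_subset_Icc {t : ℕ} (hc : IsProperTEdgeColoring G t c)
    (v : V) : vSpectrum G c v ⊆ Icc 1 t := by
  intro k hk
  obtain ⟨u, hu, rfl⟩ := mem_vSpectrum.mp hk
  exact hc.2.1 _ hu

lemma vSpectrum_comp (f : ℕ → ℕ) (v : V) :
    vSpectrum G (f ∘ c) v = (vSpectrum G c v).image f := by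
  simp only [vSpectrum, image_image]
  rfl

lemma colDef_comp_le {f : ℕ → ℕ} (hf : Monotone f) (hinj : ∀ v, Set.InjOn f (vSpectrum G c v))
    (hlip : ∀ a b, f b - f a ≤ b - a) : colDef G (f ∘ c) ≤ colDef G c :=
  sum_le_sum fun v _ => by
    rw [vSpectrum_comp]
    exact setDef_image_le hf (hinj v) hlip

lemma IsProperEdgeColoring.graphDef_le (hc : IsProperEdgeColoring G c) :
    graphDef G ≤ colDef G c :=
  Nat.sInf_le ⟨c, hc, rfl⟩

lemma exists_isProperEdgeColoring_colDef_eq_graphDef (G : SimpleGraph V) :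
    ∃ c, IsProperEdgeColoring G c ∧ colDef G c = graphDef G := by
  obtain ⟨c, hc⟩ := exists_injective_nat (Sym2 V)
  exact Nat.sInf_mem (s := {d | ∃ c, IsProperEdgeColoring G c ∧ colDef G c = d})
    ⟨_, c, isProperEdgeColoring_of_injective hc, rfl⟩

lemma exists_isProperTEdgeColoring_colDef_eq_graphDef (G : SimpleGraph V) :
    ∃ t c, IsProperTEdgeColoring G t c ∧ colDef G c = graphDef G := by
  obtain ⟨c, hc, hopt⟩ := exists_isProperEdgeColoring_colDef_eq_graphDef G
  set U := G.edgeFinset.image c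
  have hU : (U : Set ℕ) = c '' G.edgeSet := by simp [U]
  have hinj : Set.InjOn (rankIn U) (c '' G.edgeSet) := hU ▸ (rankIn_strictMonoOn U).injOn
  have hproper := hc.comp hinj
  refine ⟨#U, rankIn U ∘ c, ⟨hproper, fun e he => ?_, fun k hk => ?_⟩, ?_⟩
  · rw [← image_rankIn]
    exact mem_image_of_mem _ (mem_image_of_mem c (G.mem_edgeFinset.mpr he))
  · rw [← image_rankIn] at hk
    obtain ⟨_, hk', rfl⟩ := mem_image.mp hk
    obtain ⟨e, he, rfl⟩ := mem_image.mp hk'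
    exact ⟨e, G.mem_edgeFinset.mp he, rfl⟩
  · have hspec (v : V) : (vSpectrum G c v : Set ℕ) ⊆ c '' G.edgeSet := by
      intro k hk
      obtain ⟨u, hu, rfl⟩ := mem_vSpectrum.mp hk
      exact ⟨_, hu, rfl⟩
    refine le_antisymm ?_ hproper.graphDef_le
    exact hopt ▸ colDef_comp_le (rankIn_mono U) (fun v => hinj.mono (hspec v))
      (rankIn_sub_rankIn_le U)

end EdgeColoring

theorem stmt_7 {V : Type*} [Fintype V] (G : SimpleGraph V)
    (h : ¬∃ M : G.Subgraph, M.IsPerfectMatching) :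
    2 * (G.minDegree : ℤ) - graphDef G ≤ wdef G := by
  obtain ⟨c, hc, hopt⟩ := Nat.sInf_mem (exists_isProperTEdgeColoring_colDef_eq_graphDef G)
  have hgap : ∀ k, ∃ v, k ∉ vSpectrum G c v := by
    by_contra! ⟨k, hk⟩
    exact h (hc.1.exists_isPerfectMatching fun v => mem_vSpectrum.mp (hk v))
  have hbound : 2 * G.minDegree ≤ wdef G + colDef G c :=
    two_mul_le_add_sum_setDef hc.vSpectrum_subset_Icc
      (fun v => (G.minDegree_le_degree v).trans (hc.1.card_vSpectrum v).ge) hgap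
  rw [hopt] at hbound
  omega
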